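/- arXiv:2504.06941 — 4 statements merged into one kernel-verified Lean document; each statement's English description precedes it below -/
import Mathlib

section
/- For every prime p and all positive integers m and k, the infinite product f_m^{p^k} is congruent to f_{mp}^{p^{k-1}} modulo p^k, where f_m = ∏_{n≥1}(1 - q^{mn}); that is, every coefficient of the formal power series f_m^{p^k} - f_{mp}^{p^{k-1}} in ℤ[[q]] is divisible by p^k. -/
open PowerSeries
open scoped Classical

/-- `f m = ∏_{n ≥ 1} (1 - q^{m n})` in `ℤ[[q]]`, defined coefficientwise via the
stabilizing partial products (factors with `k > n` do not affect the coefficient of `q^n`). -/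
noncomputable def f (m : ℕ) : PowerSeries ℤ :=
  PowerSeries.mk fun n =>
    PowerSeries.coeff n (∏ k ∈ Finset.Icc 1 n, (1 - (PowerSeries.X : PowerSeries ℤ) ^ (m * k)))

/-- Ramanujan's theta function `φ(q) = ∑_{n ∈ ℤ} q^{n^2} = 1 + 2 ∑_{n ≥ 1} q^{n^2}`. -/
noncomputable def phi : PowerSeries ℤ :=
  PowerSeries.mk fun n => if n = 0 then 1 else if IsSquare n then 2 else 0

/-- Ramanujan's theta function `ψ(q) = ∑_{n ≥ 0} q^{n(n+1)/2}`. -/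
noncomputable def psi : PowerSeries ℤ :=
  PowerSeries.mk fun n => if ∃ k, k * (k + 1) = 2 * n then 1 else 0

/-- Substitution `q ↦ q^j` on formal power series. -/
noncomputable def substPow (j : ℕ) (F : PowerSeries ℤ) : PowerSeries ℤ :=
  PowerSeries.mk fun n => if j ∣ n then PowerSeries.coeff (n / j) F else 0

/-- `F(-q)`. -/
noncomputable def neg_q (F : PowerSeries ℤ) : PowerSeries ℤ :=
  PowerSeries.rescale (-1 : ℤ) F

/-- `bt n` : the number of overcubic partition triples of `n`, via the generating
function `∑ bt(n) q^n = f_4^3 / (f_1^6 f_2^3)`. -/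
noncomputable def bt (n : ℕ) : ℤ :=
  PowerSeries.coeff n (f 4 ^ 3 * Ring.inverse (f 1) ^ 6 * Ring.inverse (f 2) ^ 3)

/-! Modulo `X ^ (n + 1)`, `f m` agrees with the polynomial `∏_{k ≤ n} (1 - X^{mk})`. Modulo `p`,
Frobenius turns the `p`-th power of that polynomial into `∏_{k ≤ n} (1 - X^{mpk})`, so
`f m ^ p ≡ f (m * p) [mod p]`; raising a congruence mod `p` to the power `p ^ (k - 1)` turns it
into a congruence mod `p ^ k`. -/

namespace PowerSeries

variable {R : Type*}

theorem C_dvd_iff_dvd_coeff [Semiring R] (r : R) (φ : R⟦X⟧) :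
    C r ∣ φ ↔ ∀ n, r ∣ coeff n φ := by
  refine ⟨fun ⟨ψ, hψ⟩ n => by simp [hψ, coeff_C_mul], fun h => ?_⟩
  choose c hc using h
  exact ⟨mk c, ext fun n => by rw [coeff_C_mul, coeff_mk, hc]⟩

theorem coeff_eq_of_X_pow_dvd_sub [Ring R] {φ ψ : R⟦X⟧} {n N : ℕ} (h : X ^ N ∣ φ - ψ)
    (hn : n < N) : coeff n φ = coeff n ψ :=
  sub_eq_zero.mp (by rw [← map_sub]; exact X_pow_dvd_iff.mp h n hn)

instance charP [CommSemiring R] (p : ℕ) [CharP R p] : CharP R⟦X⟧ p :=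
  charP_of_injective_algebraMap C_injective p

theorem natCast_dvd_iff_map_zmod_eq_zero (p : ℕ) (φ : ℤ⟦X⟧) :
    (p : ℤ⟦X⟧) ∣ φ ↔ map (Int.castRingHom (ZMod p)) φ = 0 := by
  rw [← map_natCast C, C_dvd_iff_dvd_coeff, PowerSeries.ext_iff]
  simp [ZMod.intCast_zmod_eq_zero_iff_dvd]

end PowerSeries

section EulerProduct

open PowerSeries

variable (R : Type*) [CommRing R]

noncomputable def eulerPartialProd (m N : ℕ) : R⟦X⟧ :=
  ∏ k ∈ Finset.Icc 1 N, (1 - X ^ (m * k))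

variable {R}

theorem coeff_f (m n : ℕ) : coeff n (f m) = coeff n (eulerPartialProd ℤ m n) :=
  coeff_mk _ _

theorem map_eulerPartialProd {S : Type*} [CommRing S] (φ : R →+* S) (m N : ℕ) :
    map φ (eulerPartialProd R m N) = eulerPartialProd S m N := by
  simp [eulerPartialProd, map_prod]

theorem eulerPartialProd_pow_char (p : ℕ) [Fact p.Prime] [CharP R p] (m N : ℕ) :
    eulerPartialProd R m N ^ p = eulerPartialProd R (m * p) N := by
  simp only [eulerPartialProd, ← Finset.prod_pow, sub_pow_char, one_pow, ← pow_mul,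
    mul_right_comm m p]

theorem X_pow_dvd_eulerPartialProd_sub {m : ℕ} (hm : 0 < m) {n N : ℕ} (h : n ≤ N) :
    X ^ (n + 1) ∣ eulerPartialProd R m N - eulerPartialProd R m n := by
  induction N, h using Nat.le_induction with
  | base => simp
  | succ N hnN ih =>
    have hX : X ^ (n + 1) ∣ (X : R⟦X⟧) ^ (m * (N + 1)) :=
      pow_dvd_pow X (by nlinarith)
    rw [eulerPartialProd, Finset.prod_Icc_succ_top (by omega), ← eulerPartialProd]
    convert ih.sub (hX.mul_left (eulerPartialProd R m N)) using 1
    ring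

theorem X_pow_dvd_f_sub_eulerPartialProd {m : ℕ} (hm : 0 < m) (n : ℕ) :
    X ^ (n + 1) ∣ f m - eulerPartialProd ℤ m n := by
  refine X_pow_dvd_iff.mpr fun i hi => ?_
  rw [map_sub, coeff_f, coeff_eq_of_X_pow_dvd_sub
    (X_pow_dvd_eulerPartialProd_sub hm (Nat.le_of_lt_succ hi)) (Nat.lt_succ_self i), sub_self]

theorem natCast_dvd_eulerPartialProd_pow_sub {p : ℕ} (hp : p.Prime) (m N : ℕ) :
    (p : ℤ⟦X⟧) ∣ eulerPartialProd ℤ m N ^ p - eulerPartialProd ℤ (m * p) N := by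
  have := Fact.mk hp
  rw [natCast_dvd_iff_map_zmod_eq_zero, map_sub, map_pow, map_eulerPartialProd,
    map_eulerPartialProd, eulerPartialProd_pow_char, sub_self]

theorem natCast_dvd_f_pow_sub_f {p : ℕ} (hp : p.Prime) {m : ℕ} (hm : 0 < m) :
    (p : ℤ⟦X⟧) ∣ f m ^ p - f (m * p) := by
  rw [← map_natCast C, C_dvd_iff_dvd_coeff]
  intro n
  have htrunc : X ^ (n + 1) ∣ (f m ^ p - f (m * p)) -
      (eulerPartialProd ℤ m n ^ p - eulerPartialProd ℤ (m * p) n) := by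
    rw [sub_sub_sub_comm]
    exact ((X_pow_dvd_f_sub_eulerPartialProd hm n).trans (sub_dvd_pow_sub_pow _ _ p)).sub
      (X_pow_dvd_f_sub_eulerPartialProd (Nat.mul_pos hm hp.pos) n)
  rw [coeff_eq_of_X_pow_dvd_sub htrunc (Nat.lt_succ_self n)]
  refine (C_dvd_iff_dvd_coeff _ _).mp ?_ n
  rw [map_natCast]
  exact natCast_dvd_eulerPartialProd_pow_sub hp m n

end EulerProduct

theorem stmt0_general (p : ℕ) (hp : p.Prime) (m k : ℕ) (hm : 0 < m) (n : ℕ) :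
    ((p : ℤ) ^ k) ∣ PowerSeries.coeff n (f m ^ p ^ k - f (m * p) ^ p ^ (k - 1)) := by
  cases k with
  | zero => exact one_dvd _
  | succ k =>
    have h := dvd_sub_pow_of_dvd_sub (natCast_dvd_f_pow_sub_f hp hm) k
    rw [← pow_mul, ← pow_succ', ← map_natCast C, ← map_pow, C_dvd_iff_dvd_coeff] at h
    exact h n

theorem stmt0 (p : ℕ) (hp : p.Prime) (m k : ℕ) (hm : 0 < m) (hk : 0 < k) (n : ℕ) :
    ((p : ℤ) ^ k) ∣ PowerSeries.coeff n (f m ^ p ^ k - f (m * p) ^ p ^ (k - 1)) :=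
  stmt0_general p hp m k hm n
end

section
/- In ℤ[[q]], φ(q)^2 - φ(-q)^2 = 8q·ψ(q^4)^2, where φ(q) = ∑_{n∈ℤ} q^{n^2} and ψ(q) = ∑_{n≥0} q^{n(n+1)/2}. -/
open PowerSeries
open scoped Classical

/-!
Both sides are generating functions of weighted sets. `φ(q)²` counts pairs `(x, y) ∈ ℤ²` by
`x² + y²`, and `φ(q)² - φ(-q)²` is twice the count of the pairs of odd weight, i.e. with `x + y`
odd. These are exactly the pairs `(s + t + 1, s - t)` with `s, t ∈ ℤ`, of weight
`4 T(s) + 4 T(t) + 1` where `T(s) = s(s + 1)/2`. As `T(-s - 1) = T(s)`, `∑_{s ∈ ℤ} q^{T(s)} = 2ψ(q)`,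
so the odd pairs are counted by `q (2ψ(q⁴))²`.
-/

/-- `∑_{a : α} q^{w a}`. A fiber of `w` that is infinite contributes the junk coefficient `0`,
which is why the product and sum rules below assume finite fibers. -/
noncomputable def weightGenFun {α : Type*} (w : α → ℕ) : PowerSeries ℤ :=
  PowerSeries.mk fun n => Nat.card {a // w a = n}

section WeightGenFun

variable {α β : Type*}

theorem coeff_weightGenFun (w : α → ℕ) (n : ℕ) :
    coeff n (weightGenFun w) = Nat.card {a // w a = n} :=
  coeff_mk _ _

theorem subsingleton_fiber_of_injective {w : α → ℕ} (hw : Function.Injective w)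
    (n : ℕ) : Subsingleton {a // w a = n} :=
  ⟨fun a b => Subtype.ext (hw (a.2.trans b.2.symm))⟩

theorem weightGenFun_congr {w : α → ℕ} {v : β → ℕ} (e : α ≃ β) (h : ∀ a, v (e a) = w a) :
    weightGenFun w = weightGenFun v := by
  ext n
  simp only [coeff_weightGenFun]
  exact congrArg _ (Nat.card_congr (e.subtypeEquiv fun a => by rw [h]))

theorem weightGenFun_mul {w : α → ℕ} {v : β → ℕ} (hw : ∀ n, Finite {a // w a = n})
    (hv : ∀ n, Finite {b // v b = n}) :
    weightGenFun w * weightGenFun v = weightGenFun fun p : α × β => w p.1 + v p.2 := by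
  ext n
  let e : {p : α × β // w p.1 + v p.2 = n} ≃
      Σ ij : Finset.HasAntidiagonal.antidiagonal n, {a // w a = ij.1.1} × {b // v b = ij.1.2} :=
    { toFun := fun p => ⟨⟨(w p.1.1, v p.1.2), Finset.HasAntidiagonal.mem_antidiagonal.2 p.2⟩,
        ⟨p.1.1, rfl⟩, ⟨p.1.2, rfl⟩⟩
      invFun := fun x => ⟨(x.2.1, x.2.2), by
        rw [x.2.1.2, x.2.2.2]; exact Finset.HasAntidiagonal.mem_antidiagonal.1 x.1.2⟩
      left_inv := fun _ => rfl
      right_inv := by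
        rintro ⟨⟨⟨i, j⟩, hij⟩, ⟨a, ha⟩, ⟨b, hb⟩⟩
        dsimp only at ha hb
        subst ha hb
        rfl }
  rw [coeff_mul, coeff_weightGenFun, Nat.card_congr e, Nat.card_sigma, Nat.cast_sum,
    ← Finset.sum_coe_sort]
  simp only [Nat.card_prod, Nat.cast_mul, coeff_weightGenFun]

theorem weightGenFun_sumElim {w : α → ℕ} {v : β → ℕ} (hw : ∀ n, Finite {a // w a = n})
    (hv : ∀ n, Finite {b // v b = n}) :
    weightGenFun (Sum.elim w v) = weightGenFun w + weightGenFun v := by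
  ext n
  rw [map_add, coeff_weightGenFun, coeff_weightGenFun, coeff_weightGenFun,
    Nat.card_congr Equiv.subtypeSum]
  exact_mod_cast @Nat.card_sum _ _ (hw n) (hv n)

theorem X_mul_weightGenFun (w : α → ℕ) : X * weightGenFun w = weightGenFun (w · + 1) := by
  ext (_ | n)
  · simp [coeff_weightGenFun]
  · rw [coeff_succ_X_mul, coeff_weightGenFun, coeff_weightGenFun]
    simp

theorem substPow_weightGenFun {j : ℕ} (hj : j ≠ 0) (w : α → ℕ) :
    substPow j (weightGenFun w) = weightGenFun (j * w ·) := by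
  ext n
  rw [substPow, coeff_mk, coeff_weightGenFun, coeff_weightGenFun]
  split_ifs with hn
  · obtain ⟨m, rfl⟩ := hn
    simp [Nat.mul_div_cancel_left _ (Nat.pos_of_ne_zero hj), hj]
  · have : IsEmpty {a // j * w a = n} := ⟨fun a => hn ⟨_, a.2.symm⟩⟩
    simp

theorem sub_rescale_neg_one_weightGenFun (w : α → ℕ) :
    weightGenFun w - rescale (-1) (weightGenFun w) =
      2 * weightGenFun fun a : {a // Odd (w a)} => w a := by
  ext n
  rw [map_sub, coeff_rescale, ← map_ofNat C, coeff_C_mul, coeff_weightGenFun, coeff_weightGenFun,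
    Nat.card_congr (Equiv.subtypeSubtypeEquivSubtypeInter _ (w · = n))]
  rcases Nat.even_or_odd n with hn | hn
  · have : IsEmpty {a // Odd (w a) ∧ w a = n} :=
      ⟨fun a => Nat.not_odd_iff_even.2 hn (a.2.2 ▸ a.2.1)⟩
    simp [hn.neg_one_pow]
  · rw [Nat.card_congr (Equiv.subtypeEquivRight fun a => and_iff_right_of_imp fun h => h ▸ hn),
      hn.neg_one_pow]
    ring

end WeightGenFun

theorem finite_fiber_of_natAbs_le {w : ℤ → ℕ} (h : ∀ s, s.natAbs ≤ w s + 1) (n : ℕ) :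
    Finite {s // w s = n} :=
  Set.Finite.to_subtype <|
    (Set.finite_Icc (-(n : ℤ) - 1) (n + 1)).subset fun s (hs : w s = n) => by
    have := h s
    simp only [Set.mem_Icc]
    omega

theorem phi_eq_weightGenFun : phi = weightGenFun fun x : ℤ => x.natAbs ^ 2 := by
  ext n
  rw [phi, coeff_mk, coeff_weightGenFun]
  split_ifs with h0 hsq
  · subst h0
    have : Unique {x : ℤ // x.natAbs ^ 2 = 0} := ⟨⟨⟨0, rfl⟩⟩, fun x => by ext; simpa using x.2⟩
    simp
  · obtain ⟨r, rfl⟩ := hsq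
    have : {x : ℤ | x.natAbs ^ 2 = r * r} = {(r : ℤ), -(r : ℤ)} := by
      ext x
      simp [← sq, Int.natAbs_eq_iff]
    have hr : r ≠ 0 := by rintro rfl; exact h0 rfl
    rw [← Set.coe_ofPred, Nat.card_coe_set_eq, this, Set.ncard_pair (by omega)]
    rfl
  · have : IsEmpty {x : ℤ // x.natAbs ^ 2 = n} :=
      ⟨fun x => hsq ⟨x.1.natAbs, by rw [← sq, x.2]⟩⟩
    simp

def triangular (s : ℤ) : ℕ := (s * (s + 1) / 2).toNat

theorem two_mul_triangular (s : ℤ) : 2 * (triangular s : ℤ) = s * (s + 1) := by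
  obtain ⟨c, hc⟩ := Int.even_mul_succ_self s
  have : 0 ≤ s * (s + 1) := by rcases le_or_gt 0 s with h | h <;> nlinarith
  rw [triangular, hc] at *
  omega

theorem triangular_neg_sub_one (s : ℤ) : triangular (-s - 1) = triangular s := by
  have h := two_mul_triangular (-s - 1)
  rw [show (-s - 1) * (-s - 1 + 1) = s * (s + 1) by ring, ← two_mul_triangular s] at h
  omega

theorem triangular_natCast_injective : Function.Injective fun k : ℕ => triangular k := by
  intro k l hkl
  have hk := two_mul_triangular k
  have hl := two_mul_triangular l
  simp only at hkl
  rw [hkl, hl] at hk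
  by_contra hne
  rcases Nat.lt_or_gt_of_ne hne with h | h <;> nlinarith

theorem psi_eq_weightGenFun : psi = weightGenFun fun k : ℕ => triangular k := by
  ext n
  have key (k : ℕ) : triangular k = n ↔ k * (k + 1) = 2 * n := by
    have h : 2 * (triangular k : ℤ) = ((k * (k + 1) : ℕ) : ℤ) := by
      push_cast; exact two_mul_triangular k
    omega
  rw [psi, coeff_mk, coeff_weightGenFun]
  have := subsingleton_fiber_of_injective triangular_natCast_injective n
  split_ifs with h
  · obtain ⟨k, hk⟩ := h
    have : Nonempty {k : ℕ // triangular k = n} := ⟨⟨k, (key k).2 hk⟩⟩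
    rw [Nat.card_unique, Nat.cast_one]
  · have : IsEmpty {k : ℕ // triangular k = n} := ⟨fun k => h ⟨k, (key k).1 k.2⟩⟩
    simp

theorem weightGenFun_four_mul_triangular :
    weightGenFun (fun s : ℤ => 4 * triangular s) = 2 * substPow 4 psi := by
  have hinj : Function.Injective fun k : ℕ => 4 * triangular k :=
    fun k l h => triangular_natCast_injective (Nat.eq_of_mul_eq_mul_left four_pos h)
  have hfin (n : ℕ) : Finite {k : ℕ // 4 * triangular k = n} :=
    have := subsingleton_fiber_of_injective hinj n
    inferInstance
  rw [psi_eq_weightGenFun, substPow_weightGenFun four_ne_zero, two_mul,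
    ← weightGenFun_sumElim hfin hfin]
  refine weightGenFun_congr Equiv.intEquivNatSumNat ?_
  rintro (k | k)
  · rfl
  · show 4 * triangular k = 4 * triangular (Int.negSucc k)
    rw [Int.negSucc_eq, neg_add', triangular_neg_sub_one]

theorem natAbs_le_four_mul_triangular_add_one (s : ℤ) : s.natAbs ≤ 4 * triangular s + 1 := by
  have := two_mul_triangular s
  rcases le_or_gt 0 s with h | h <;> zify
  · rw [abs_of_nonneg h]; nlinarith
  · rw [abs_of_neg h]; nlinarith

theorem natAbs_add_add_one_sq_add_natAbs_sub_sq (s t : ℤ) :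
    (s + t + 1).natAbs ^ 2 + (s - t).natAbs ^ 2 = 4 * triangular s + 4 * triangular t + 1 := by
  have hs := two_mul_triangular s
  have ht := two_mul_triangular t
  zify
  simp only [sq_abs]
  linear_combination -2 * hs - 2 * ht

theorem odd_natAbs_sq_add_natAbs_sq_iff (x y : ℤ) :
    Odd (x.natAbs ^ 2 + y.natAbs ^ 2) ↔ Odd (x + y) := by
  simp [Int.odd_add, Nat.odd_add, Nat.odd_pow_iff two_ne_zero, Nat.even_pow, Int.natAbs_odd,
    parity_simps]

def oddSumSqEquiv : ℤ × ℤ ≃ {p : ℤ × ℤ // Odd (p.1.natAbs ^ 2 + p.2.natAbs ^ 2)} where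
  toFun p := ⟨(p.1 + p.2 + 1, p.1 - p.2), by
    rw [odd_natAbs_sq_add_natAbs_sq_iff]; exact ⟨p.1, by ring⟩⟩
  invFun q := ((q.1.1 + q.1.2 - 1) / 2, (q.1.1 - q.1.2 - 1) / 2)
  left_inv p := by ext <;> dsimp only <;> omega
  right_inv q := by
    obtain ⟨⟨x, y⟩, h⟩ := q
    rw [odd_natAbs_sq_add_natAbs_sq_iff] at h
    obtain ⟨k, hk⟩ := h
    ext <;> dsimp only at hk ⊢ <;> omega

theorem stmt3 : phi ^ 2 - (neg_q phi) ^ 2 = 8 * PowerSeries.X * (substPow 4 psi) ^ 2 := by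
  have hfin_sq := finite_fiber_of_natAbs_le (w := (·.natAbs ^ 2))
    fun x => (Nat.le_self_pow two_ne_zero _).trans (Nat.le_succ _)
  have hfin_tri := finite_fiber_of_natAbs_le natAbs_le_four_mul_triangular_add_one
  calc phi ^ 2 - (neg_q phi) ^ 2
      = 2 * weightGenFun fun p : {p : ℤ × ℤ // Odd (p.1.natAbs ^ 2 + p.2.natAbs ^ 2)} =>
          p.1.1.natAbs ^ 2 + p.1.2.natAbs ^ 2 := by
        rw [neg_q, ← map_pow, sq, phi_eq_weightGenFun, weightGenFun_mul hfin_sq hfin_sq,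
          sub_rescale_neg_one_weightGenFun]
    _ = 2 * (X * weightGenFun fun p : ℤ × ℤ => 4 * triangular p.1 + 4 * triangular p.2) := by
        rw [X_mul_weightGenFun]
        exact congrArg _ (weightGenFun_congr oddSumSqEquiv
          fun p => natAbs_add_add_one_sq_add_natAbs_sub_sq p.1 p.2).symm
    _ = 2 * (X * (2 * substPow 4 psi) ^ 2) := by
        rw [← weightGenFun_four_mul_triangular, sq, weightGenFun_mul hfin_tri hfin_tri]
    _ = 8 * X * substPow 4 psi ^ 2 := by ring
end

section
/- In ℤ[[q]], φ(q)^2 + φ(-q)^2 = 2φ(q^2)^2, where φ(q) = ∑_{n∈ℤ} q^{n^2}. -/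
/-!
The coefficient of `q ^ n` in `φ(q) ^ 2` is the number `r₂ n` of pairs `(a, b) ∈ ℤ²` with
`a ^ 2 + b ^ 2 = n`. Adding `φ(-q) ^ 2` cancels the odd coefficients and doubles the even ones,
so the identity says `r₂ (2 * n) = r₂ n`, which holds because `(a, b) ↦ (a + b, a - b)` is a
bijection between the two sets of representations.
-/

open PowerSeries
open scoped Classical

theorem substPow_eq_expand {j : ℕ} (hj : j ≠ 0) (F : PowerSeries ℤ) :
    substPow j F = expand j hj F := by
  ext n
  simp [substPow, coeff_expand]

theorem PowerSeries.add_rescale_neg_one_eq_two_mul_expand {R : Type*} [CommRing R]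
    {F G : PowerSeries R} (h : ∀ n, coeff (2 * n) F = coeff n G) :
    F + rescale (-1) F = 2 * expand 2 two_ne_zero G := by
  ext n
  rw [map_add, coeff_rescale, show (2 : PowerSeries R) = C 2 from rfl, coeff_C_mul, coeff_expand]
  rcases Nat.even_or_odd' n with ⟨m, rfl | rfl⟩
  · rw [if_pos (dvd_mul_right 2 m), Nat.mul_div_cancel_left m two_pos, ← h, pow_mul]
    ring
  · rw [if_neg (by omega), Odd.neg_one_pow ⟨m, rfl⟩]
    ring

noncomputable def squareRoots (n : ℕ) : Finset ℤ :=
  (Finset.Icc (-(n : ℤ)) n).filter (· ^ 2 = n)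

noncomputable def sumTwoSquaresReps (n : ℕ) : Finset (ℤ × ℤ) :=
  (Finset.Icc (-(n : ℤ)) n ×ˢ Finset.Icc (-(n : ℤ)) n).filter (fun p => p.1 ^ 2 + p.2 ^ 2 = n)

theorem mem_squareRoots {n : ℕ} {a : ℤ} : a ∈ squareRoots n ↔ a ^ 2 = n := by
  simp only [squareRoots, Finset.mem_filter, Finset.mem_Icc, and_iff_right_iff_imp]
  intro h
  constructor <;> nlinarith [sq_nonneg (a - 1), sq_nonneg (a + 1)]

theorem mem_sumTwoSquaresReps {n : ℕ} {p : ℤ × ℤ} :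
    p ∈ sumTwoSquaresReps n ↔ p.1 ^ 2 + p.2 ^ 2 = n := by
  simp only [sumTwoSquaresReps, Finset.mem_filter, Finset.mem_product, Finset.mem_Icc,
    and_iff_right_iff_imp]
  intro h
  refine ⟨⟨?_, ?_⟩, ?_, ?_⟩ <;>
    nlinarith [sq_nonneg (p.1 - 1), sq_nonneg (p.1 + 1), sq_nonneg (p.2 - 1), sq_nonneg (p.2 + 1)]

theorem coeff_phi (n : ℕ) : coeff n phi = ((squareRoots n).card : ℤ) := by
  rw [phi, coeff_mk]
  split_ifs with h0 hsq
  · subst h0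
    have : squareRoots 0 = {0} := by ext a; simp [mem_squareRoots]
    simp [this]
  · obtain ⟨k, rfl⟩ := hsq
    have hk : (k : ℤ) ≠ 0 := by exact_mod_cast fun hk => h0 (by simp [hk])
    have : squareRoots (k * k) = {(k : ℤ), -(k : ℤ)} := by
      ext a
      rw [mem_squareRoots, Nat.cast_mul, ← sq, sq_eq_sq_iff_eq_or_eq_neg]
      simp
    rw [this, Finset.card_pair (by omega)]
    rfl
  · have : squareRoots n = ∅ := by
      refine Finset.eq_empty_of_forall_notMem fun a ha => hsq ⟨a.natAbs, ?_⟩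
      rw [mem_squareRoots, ← Int.natAbs_sq, sq] at ha
      exact_mod_cast ha.symm
    simp [this]

theorem coeff_phi_sq (n : ℕ) : coeff n (phi ^ 2) = ((sumTwoSquaresReps n).card : ℤ) := by
  have hfib : ∀ p ∈ sumTwoSquaresReps n,
      (p.1.natAbs ^ 2, p.2.natAbs ^ 2) ∈ Finset.HasAntidiagonal.antidiagonal n := by
    intro p hp
    rw [mem_sumTwoSquaresReps, ← Int.natAbs_sq p.1, ← Int.natAbs_sq p.2] at hp
    rw [Finset.HasAntidiagonal.mem_antidiagonal]
    exact_mod_cast hp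
  rw [sq, coeff_mul, Finset.card_eq_sum_card_fiberwise hfib, Nat.cast_sum]
  refine Finset.sum_congr rfl fun ij hij => ?_
  rw [Finset.HasAntidiagonal.mem_antidiagonal] at hij
  have hfiber : (sumTwoSquaresReps n).filter (fun p => (p.1.natAbs ^ 2, p.2.natAbs ^ 2) = ij)
      = squareRoots ij.1 ×ˢ squareRoots ij.2 := by
    ext p
    simp only [Finset.mem_filter, Finset.mem_product, mem_squareRoots, mem_sumTwoSquaresReps,
      Prod.ext_iff, ← Int.natAbs_sq p.1, ← Int.natAbs_sq p.2]
    constructor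
    · rintro ⟨-, h1, h2⟩
      exact ⟨by exact_mod_cast h1, by exact_mod_cast h2⟩
    · rintro ⟨h1, h2⟩
      refine ⟨?_, by exact_mod_cast h1, by exact_mod_cast h2⟩
      rw [h1, h2, ← hij, Nat.cast_add]
  rw [hfiber, Finset.card_product, Nat.cast_mul, coeff_phi, coeff_phi]

theorem card_sumTwoSquaresReps_two_mul (n : ℕ) :
    (sumTwoSquaresReps (2 * n)).card = (sumTwoSquaresReps n).card := by
  refine (Finset.card_bij (fun p _ => (p.1 + p.2, p.1 - p.2)) ?_ ?_ ?_).symm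
  · intro p hp
    rw [mem_sumTwoSquaresReps] at hp ⊢
    push_cast
    linear_combination 2 * hp
  · intro p _ q _ h
    simp only [Prod.ext_iff] at h ⊢
    omega
  · intro x hx
    rw [mem_sumTwoSquaresReps] at hx
    have heven : Even (x.1 + x.2) := by
      have : Even (x.1 ^ 2 + x.2 ^ 2) := hx ▸ ⟨(n : ℤ), by push_cast; ring⟩
      simpa [Int.even_add, Int.even_pow] using this
    obtain ⟨a, ha⟩ := heven
    refine ⟨(a, x.1 - a), ?_, by ext <;> simp only <;> omega⟩
    rw [mem_sumTwoSquaresReps]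
    have hx2 : x.2 = 2 * a - x.1 := by omega
    rw [hx2] at hx
    push_cast at hx
    linarith

theorem stmt4 : phi ^ 2 + (neg_q phi) ^ 2 = 2 * (substPow 2 phi) ^ 2 := by
  rw [neg_q, substPow_eq_expand two_ne_zero, ← map_pow, ← map_pow]
  refine add_rescale_neg_one_eq_two_mul_expand fun n => ?_
  rw [coeff_phi_sq, coeff_phi_sq, card_sumTwoSquaresReps_two_mul]
end

section
/- In ℤ[[q]], with f_m = ∏_{n≥1}(1 - q^{mn}), one has (1/f_1^2)·f_2^5 f_8 f_{16}^2 = f_8^6 + 2q f_4^2 f_{16}^4 (equivalently, 1/f_1^2 = f_8^5/(f_2^5 f_{16}^2) + 2q·f_4^2 f_{16}^2/(f_2^5 f_8)). -/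
open PowerSeries
open scoped Classical

-- ## auxiliary development

abbrev Zx : Type := PowerSeries ℤ

noncomputable def jtPF (c : ℤ) (g : ℕ → ℕ) (M : ℕ) : Zx :=
  ∏ k ∈ Finset.Ioc 0 M, (1 + (PowerSeries.C c) * PowerSeries.X ^ (g k))

noncomputable def jtPL (c : ℤ) (g : ℕ → ℕ) : Zx :=
  PowerSeries.mk fun n => PowerSeries.coeff n (jtPF c g n)

def mEq (N : ℕ) (F G : Zx) : Prop := ∀ t ≤ N, PowerSeries.coeff t F = PowerSeries.coeff t G

lemma mEq_mul {N : ℕ} {F F' G G' : Zx} (h1 : mEq N F F') (h2 : mEq N G G') :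
    mEq N (F * G) (F' * G') := by
  intro t ht
  rw [coeff_mul, coeff_mul]
  refine Finset.sum_congr rfl fun p hp => ?_
  have hps := Finset.HasAntidiagonal.mem_antidiagonal.mp hp
  rw [h1 p.1 (by omega), h2 p.2 (by omega)]

lemma coeff_of_mEq {N : ℕ} {F G : Zx} (h : mEq N F G) :
    PowerSeries.coeff N F = PowerSeries.coeff N G := h N le_rfl

lemma coeff_mul_one_add (F : Zx) (c : ℤ) {e n : ℕ} (h : n < e) :
    PowerSeries.coeff n (F * (1 + PowerSeries.C c * PowerSeries.X ^ e)) =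
      PowerSeries.coeff n F := by
  rw [mul_add, mul_one, map_add]
  have h2 : F * (PowerSeries.C c * PowerSeries.X ^ e) = (F * PowerSeries.C c) * PowerSeries.X ^ e := by ring
  rw [h2, coeff_mul_X_pow', if_neg (by omega), add_zero]

lemma jtPF_stab (c : ℤ) (g : ℕ → ℕ) (hg : ∀ k, k ≤ g k) {n M M' : ℕ}
    (h1 : n ≤ M) (h2 : M ≤ M') :
    PowerSeries.coeff n (jtPF c g M') = PowerSeries.coeff n (jtPF c g M) := by
  induction M', h2 using Nat.le_induction with
  | base => rfl
  | succ m hm ih =>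
      rw [jtPF, Finset.prod_Ioc_succ_top (Nat.zero_le _), ← jtPF,
        coeff_mul_one_add _ _ (lt_of_le_of_lt (h1.trans hm) (lt_of_lt_of_le (Nat.lt_succ_self m) (hg (m+1))))]
      exact ih

lemma mEq_jtPL (c : ℤ) (g : ℕ → ℕ) (hg : ∀ k, k ≤ g k) {N M : ℕ} (h : N ≤ M) :
    mEq N (jtPL c g) (jtPF c g M) := by
  intro t ht
  rw [jtPL, coeff_mk]
  exact (jtPF_stab c g hg le_rfl (ht.trans h)).symm

lemma f_eq_jtPL (m : ℕ) : f m = jtPL (-1) (fun k => m * k) := by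
  apply PowerSeries.ext; intro n
  rw [f, jtPL, coeff_mk, coeff_mk]
  congr 1
  rw [jtPF, ← Finset.Icc_add_one_left_eq_Ioc]
  refine Finset.prod_congr rfl fun k _ => ?_
  have : PowerSeries.C (-1 : ℤ) = -1 := by simp
  rw [this]; ring

noncomputable def Of : Zx := jtPL 1 (fun k => 2*k - 1)
noncomputable def Ef : Zx := jtPL 1 (fun k => 2*k)
noncomputable def Omf : Zx := jtPL (-1) (fun k => 2*k - 1)
noncomputable def Gf : Zx := jtPL (-1) (fun k => 2*(2*k - 1))

lemma hg_odd : ∀ k : ℕ, k ≤ 2*k - 1 := by intro k; omega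
lemma hg_even : ∀ k : ℕ, k ≤ 2*k := by intro k; omega
lemma hg_dodd : ∀ k : ℕ, k ≤ 2*(2*k - 1) := by intro k; omega
lemma hg_mul (m : ℕ) (hm : 1 ≤ m) : ∀ k : ℕ, k ≤ m*k := by intro k; exact Nat.le_mul_of_pos_left k hm

lemma prod_Ioc_double (u : ℕ → Zx) (M : ℕ) :
    ∏ k ∈ Finset.Ioc 0 (2*M), u k = ∏ k ∈ Finset.Ioc 0 M, (u (2*k - 1) * u (2*k)) := by
  induction M with
  | zero => simp
  | succ m ih =>
      have h2 : 2*(m+1) = 2*m+1+1 := by ring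
      rw [h2, Finset.prod_Ioc_succ_top (by omega), Finset.prod_Ioc_succ_top (by omega), ih,
        Finset.prod_Ioc_succ_top (Nat.zero_le _)]
      have e1 : 2*(m+1) - 1 = 2*m+1 := by omega
      rw [e1, h2, mul_assoc]

lemma jtPF_mul (c c' : ℤ) (g g' : ℕ → ℕ) (M : ℕ) :
    jtPF c g M * jtPF c' g' M =
      ∏ k ∈ Finset.Ioc 0 M,
        ((1 + PowerSeries.C c * PowerSeries.X ^ (g k)) *
          (1 + PowerSeries.C c' * PowerSeries.X ^ (g' k))) := by
  rw [jtPF, jtPF, ← Finset.prod_mul_distrib]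

lemma P1 : f 1 = Omf * f 2 := by
  apply PowerSeries.ext; intro N
  rw [f_eq_jtPL 1, f_eq_jtPL 2]
  have hR : PowerSeries.coeff N (Omf * jtPL (-1) (fun k => 2*k)) =
      PowerSeries.coeff N (jtPF (-1) (fun k => 2*k-1) N * jtPF (-1) (fun k => 2*k) N) :=
    coeff_of_mEq (mEq_mul (mEq_jtPL _ _ hg_odd le_rfl) (mEq_jtPL _ _ hg_even le_rfl))
  rw [hR, jtPF_mul]
  have hL : PowerSeries.coeff N (jtPL (-1) (fun k => 1*k)) =
      PowerSeries.coeff N (jtPF (-1) (fun k => 1*k) (2*N)) :=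
    coeff_of_mEq (mEq_jtPL _ _ (hg_mul 1 le_rfl) (by omega))
  rw [hL, jtPF, prod_Ioc_double]
  refine congrArg _ (Finset.prod_congr rfl fun k _ => ?_)
  have e1 : 1*(2*k-1) = 2*k-1 := by omega
  have e2 : 1*(2*k) = 2*k := by omega
  rw [e1, e2]

lemma one_add_mul_one_sub (e : ℕ) :
    (1 + PowerSeries.C 1 * PowerSeries.X ^ e) * (1 + PowerSeries.C (-1) * PowerSeries.X ^ e)
      = 1 + PowerSeries.C (-1) * PowerSeries.X ^ (2*e) := by
  have h : (PowerSeries.X : Zx) ^ (2*e) = (PowerSeries.X ^ e) * (PowerSeries.X ^ e) := by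
    rw [← pow_add]; ring_nf
  rw [h]
  have c1 : PowerSeries.C (1 : ℤ) = 1 := by simp
  have c2 : PowerSeries.C (-1 : ℤ) = -1 := by simp
  rw [c1, c2]; ring

lemma P2 : Of * Omf = Gf := by
  apply PowerSeries.ext; intro N
  rw [Of, Omf, Gf]
  have hR : PowerSeries.coeff N (jtPL 1 (fun k => 2*k-1) * jtPL (-1) (fun k => 2*k-1)) =
      PowerSeries.coeff N (jtPF 1 (fun k => 2*k-1) N * jtPF (-1) (fun k => 2*k-1) N) :=
    coeff_of_mEq (mEq_mul (mEq_jtPL _ _ hg_odd le_rfl) (mEq_jtPL _ _ hg_odd le_rfl))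
  rw [hR, jtPF_mul, jtPL, coeff_mk, jtPF]
  exact congrArg _ (Finset.prod_congr rfl fun k _ => one_add_mul_one_sub _)

lemma P3 : Gf * f 4 = f 2 := by
  apply PowerSeries.ext; intro N
  rw [f_eq_jtPL 4, f_eq_jtPL 2, Gf]
  have hR : PowerSeries.coeff N (jtPL (-1) (fun k => 2*(2*k-1)) * jtPL (-1) (fun k => 4*k)) =
      PowerSeries.coeff N (jtPF (-1) (fun k => 2*(2*k-1)) N * jtPF (-1) (fun k => 4*k) N) :=
    coeff_of_mEq (mEq_mul (mEq_jtPL _ _ hg_dodd le_rfl) (mEq_jtPL _ _ (hg_mul 4 (by omega)) le_rfl))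
  rw [hR, jtPF_mul]
  have hL : PowerSeries.coeff N (jtPL (-1) (fun k => 2*k)) =
      PowerSeries.coeff N (jtPF (-1) (fun k => 2*k) (2*N)) :=
    coeff_of_mEq (mEq_jtPL _ _ hg_even (by omega))
  rw [hL, jtPF, prod_Ioc_double]
  refine congrArg _ (Finset.prod_congr rfl fun k _ => ?_)
  have e2 : 2*(2*k) = 4*k := by omega
  rw [e2]

lemma P4 : Ef * f 2 = f 4 := by
  apply PowerSeries.ext; intro N
  rw [f_eq_jtPL 4, f_eq_jtPL 2, Ef]
  have hR : PowerSeries.coeff N (jtPL 1 (fun k => 2*k) * jtPL (-1) (fun k => 2*k)) =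
      PowerSeries.coeff N (jtPF 1 (fun k => 2*k) N * jtPF (-1) (fun k => 2*k) N) :=
    coeff_of_mEq (mEq_mul (mEq_jtPL _ _ hg_even le_rfl) (mEq_jtPL _ _ hg_even le_rfl))
  rw [hR, jtPF_mul, jtPL, coeff_mk, jtPF]
  refine congrArg _ (Finset.prod_congr rfl fun k _ => ?_)
  have := one_add_mul_one_sub (2*k)
  rw [this]
  have e : 2*(2*k) = 4*k := by omega
  rw [e]
-- ## Part 2 : Gaussian binomials

noncomputable def Qp (t : ℕ) : Zx := PowerSeries.X ^ (2*t)

lemma Qp_add (a b : ℕ) : Qp a * Qp b = Qp (a+b) := by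
  rw [Qp, Qp, Qp, ← pow_add]; congr 1; ring

lemma Qp_zero : Qp 0 = 1 := by rw [Qp]; norm_num

noncomputable def gb : ℕ → ℕ → Zx
  | 0, 0 => 1
  | 0, _+1 => 0
  | _+1, 0 => 1
  | m+1, i+1 => gb m (i+1) + Qp (m - i) * gb m i

lemma gb_zero (m : ℕ) : gb m 0 = 1 := by cases m <;> rfl

lemma gb_succ (m i : ℕ) : gb (m+1) (i+1) = gb m (i+1) + Qp (m - i) * gb m i := rfl

lemma gb_of_gt : ∀ m i, m < i → gb m i = 0 := by
  intro m
  induction m with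
  | zero => intro i hi; match i, hi with | j+1, _ => rfl
  | succ m ih =>
      intro i hi
      match i, hi with
      | j+1, hj =>
        rw [gb_succ, ih (j+1) (by omega), ih j (by omega), mul_zero, add_zero]

lemma gb_diag : ∀ m, gb m m = 1 := by
  intro m
  induction m with
  | zero => rfl
  | succ m ih =>
      rw [gb_succ, gb_of_gt m (m+1) (by omega), ih, Nat.sub_self, Qp_zero]
      ring

lemma gb_abs : ∀ m i, (1 - Qp (i+1)) * gb m (i+1) = (1 - Qp (m - i)) * gb m i := by
  intro m
  induction m with
  | zero =>
      intro i
      rw [gb_of_gt 0 (i+1) (by omega)]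
      cases i with
      | zero => rw [Nat.zero_sub, Qp_zero, gb_zero]; ring
      | succ j => rw [gb_of_gt 0 (j+1) (by omega)]; ring
  | succ m ih =>
      intro i
      cases i with
      | zero =>
          have h1 := ih 0
          rw [Nat.sub_zero, gb_zero] at h1
          rw [gb_succ, Nat.sub_zero, Nat.sub_zero, gb_zero m, gb_zero (m+1)]
          have hq : Qp 1 * Qp m = Qp (m+1) := by
            rw [Qp_add, show 1+m = m+1 by omega]
          linear_combination h1 - hq
      | succ j =>
          rcases lt_or_ge j m with hj | hj
          · have IH1 := ih (j+1)
            have IH0 := ih j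
            rw [gb_succ, gb_succ]
            have hmj1 : m - (j+1) = m - j - 1 := by omega
            have hmj2 : m + 1 - (j+1) = m - j := by omega
            rw [hmj1, hmj2]
            rw [hmj1] at IH1
            have h1 : Qp (m-j-1) * Qp (j+2) = Qp (m+1) := by
              rw [Qp_add, show m-j-1+(j+2) = m+1 by omega]
            have h2 : Qp (m-j) * Qp (j+1) = Qp (m+1) := by
              rw [Qp_add, show m-j+(j+1) = m+1 by omega]
            linear_combination IH1 + Qp (m-j) * IH0 - gb m (j+1) * h1 + gb m (j+1) * h2
          · have hz : gb (m+1) (j+2) = 0 := gb_of_gt _ _ (by omega)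
            have hz2 : m + 1 - (j+1) = 0 := by omega
            rw [hz, hz2, Qp_zero, mul_zero]
            ring

lemma gb_pascal1 (m i : ℕ) : gb (m+1) (i+1) = gb m i + Qp (i+1) * gb m (i+1) := by
  rw [gb_succ]
  linear_combination gb_abs m i

-- D products
noncomputable def DI (a b : ℕ) : Zx :=
  ∏ k ∈ Finset.Ioc a b, (1 + PowerSeries.C (-1) * PowerSeries.X ^ (2*k))

lemma DI_factor (t : ℕ) :
    (1 + PowerSeries.C (-1) * PowerSeries.X ^ (2*t) : Zx) = 1 - Qp t := by
  have c2 : PowerSeries.C (-1 : ℤ) = -1 := by simp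
  rw [c2, Qp]; ring

lemma DI_self (a : ℕ) : DI a a = 1 := by rw [DI, Finset.Ioc_self, Finset.prod_empty]

lemma DI_succ {a b : ℕ} (h : a ≤ b) : DI a (b+1) = DI a b * (1 - Qp (b+1)) := by
  rw [DI, Finset.prod_Ioc_succ_top h, DI_factor, DI]

lemma DI_split {a b c : ℕ} (h1 : a ≤ b) (h2 : b ≤ c) : DI a b * DI b c = DI a c :=
  Finset.prod_Ioc_consecutive _ h1 h2

lemma gbD : ∀ m i, i ≤ m → gb m i * (DI 0 i * DI 0 (m-i)) = DI 0 m := by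
  intro m
  induction m with
  | zero =>
      intro i hi
      interval_cases i
      rw [gb_zero, DI_self]; ring
  | succ m ih =>
      intro i hi
      cases i with
      | zero =>
          rw [gb_zero, DI_self, Nat.sub_zero]; ring
      | succ j =>
          rcases eq_or_lt_of_le hi with he | hlt
          · rw [he, gb_diag, Nat.sub_self, DI_self]; ring
          · have hjm : j + 1 ≤ m := by omega
            have hjm' : j ≤ m := by omega
            have IH1 := ih (j+1) hjm
            have IH0 := ih j hjm'
            rw [gb_succ]
            have e1 : m + 1 - (j+1) = (m - j - 1) + 1 := by omega
            have e2 : m - (j+1) = m - j - 1 := by omega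
            rw [e1, DI_succ (Nat.zero_le _), DI_succ (Nat.zero_le _)]
            rw [e2, DI_succ (Nat.zero_le j)] at IH1
            have e3 : m - j - 1 + 1 = m - j := by omega
            rw [e3]
            rw [show m - j = m-j-1+1 by omega, DI_succ (Nat.zero_le _), e3] at IH0
            have h1 : Qp (m-j) * Qp (j+1) = Qp (m+1) := by
              rw [Qp_add, show m-j+(j+1) = m+1 by omega]
            rw [DI_succ (Nat.zero_le m)]
            linear_combination (1 - Qp (m-j)) * IH1 + Qp (m-j) * (1 - Qp (j+1)) * IH0 - DI 0 m * h1

lemma mEq_one_DI {N a b : ℕ} (h : N ≤ 2*a+1) : mEq N (DI a b) 1 := by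
  induction b with
  | zero =>
      intro t ht
      rw [DI, Finset.Ioc_eq_empty (by omega), Finset.prod_empty]
  | succ b ih =>
      rcases le_or_gt a b with h2 | h2
      · intro t ht
        rw [DI, Finset.prod_Ioc_succ_top h2]
        have : PowerSeries.coeff t
            ((∏ k ∈ Finset.Ioc a b, (1 + PowerSeries.C (-1) * PowerSeries.X ^ (2*k))) *
              (1 + PowerSeries.C (-1) * PowerSeries.X ^ (2*(b+1)))) =
            PowerSeries.coeff t (DI a b) := by
          rw [← DI]
          exact coeff_mul_one_add _ _ (by omega)
        rw [this]
        exact ih t ht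
      · intro t ht
        rw [DI, Finset.Ioc_eq_empty (by omega), Finset.prod_empty]

lemma mEq_one_mul {N : ℕ} {F G : Zx} (hF : mEq N F 1) (hG : mEq N G 1) : mEq N (F * G) 1 := by
  intro t ht
  have := mEq_mul hF hG t ht
  simpa using this

lemma mEq_one_of_mul {N : ℕ} {A W V : Zx} (hW : mEq N W 1) (hV : mEq N V 1)
    (h : A * W = V) : mEq N A 1 := by
  intro t ht
  have hc : PowerSeries.coeff t (A * W) = PowerSeries.coeff t V := by rw [h]
  rw [coeff_mul] at hc
  have hsum : ∑ p ∈ Finset.HasAntidiagonal.antidiagonal t,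
      PowerSeries.coeff p.1 A * PowerSeries.coeff p.2 W = PowerSeries.coeff t A := by
    rw [Finset.sum_eq_single (t, 0)]
    · rw [hW 0 (by omega), coeff_one, if_pos rfl, mul_one]
    · rintro ⟨a, b⟩ hab hne
      have hab' := Finset.HasAntidiagonal.mem_antidiagonal.mp hab
      have hb : b ≠ 0 := by
        intro h0
        apply hne
        simp only [h0, add_zero] at hab'
        rw [hab', h0]
      rw [hW b (by omega), coeff_one, if_neg hb, mul_zero]
    · intro hmem
      exact absurd (Finset.HasAntidiagonal.mem_antidiagonal.mpr (by omega)) hmem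
  rw [hsum] at hc
  rw [hc, hV t ht]

lemma DI_ne_zero (M : ℕ) : DI 0 M ≠ 0 := by
  intro h0
  have h1 : PowerSeries.coeff 0 (DI 0 M) = 1 := by
    have := mEq_one_DI (N := 0) (a := 0) (b := M) (by omega) 0 le_rfl
    rw [this, coeff_one, if_pos rfl]
  rw [h0, map_zero] at h1
  exact one_ne_zero h1.symm

lemma gbDQ_one {M i N : ℕ} (hi : i ≤ 2*M) (hN : N ≤ 2*(min i (2*M - i)) + 1) :
    mEq N (DI 0 M * gb (2*M) i) 1 := by
  set s := min i (2*M - i) with hs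
  set l := max i (2*M - i) with hl
  have hsM : s ≤ M := by omega
  have hMl : M ≤ l := by omega
  have hsl : s + l = 2*M := by omega
  have hE0 : gb (2*M) i * (DI 0 i * DI 0 (2*M - i)) = DI 0 (2*M) := gbD (2*M) i hi
  have hEs : DI 0 i * DI 0 (2*M - i) = DI 0 s * DI 0 l := by
    rcases le_total i (2*M - i) with hc | hc
    · rw [hs, hl, min_eq_left hc, max_eq_right hc]
    · rw [hs, hl, min_eq_right hc, max_eq_left hc, mul_comm]
  rw [hEs] at hE0
  have h2 : DI 0 l = DI 0 M * DI M l := (DI_split (Nat.zero_le _) hMl).symm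
  have h3 : DI 0 (2*M) = DI 0 M * DI M (2*M) := (DI_split (Nat.zero_le _) (by omega)).symm
  rw [h2, h3] at hE0
  have hcan : gb (2*M) i * DI 0 s * DI M l = DI M (2*M) := by
    apply mul_left_cancel₀ (DI_ne_zero M)
    linear_combination hE0
  have hE2 : (DI 0 M * gb (2*M) i) * DI M l = DI s M * DI M (2*M) := by
    have hDM : DI 0 s * DI s M = DI 0 M := DI_split (Nat.zero_le _) hsM
    linear_combination DI s M * hcan - gb (2*M) i * DI M l * hDM
  exact mEq_one_of_mul
    (mEq_one_DI (by omega))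
    (mEq_one_mul (mEq_one_DI (by omega)) (mEq_one_DI (by omega)))
    hE2
-- ## Part 3 : finite Jacobi triple product

noncomputable def sqe (M i : ℕ) : ℕ := (((M:ℤ) - i)^2).toNat

lemma sq_cast (M i : ℕ) : ((sqe M i : ℤ)) = ((M:ℤ) - i)^2 := Int.toNat_of_nonneg (sq_nonneg _)

lemma sq_succ_succ (M i : ℕ) : sqe (M+1) (i+1) = sqe M i := by
  unfold sqe; congr 1; push_cast; ring

lemma sqA (M e : ℕ) : sqe M e + 2*(e+1) = sqe M (e+1) + (2*M+1) := by
  have h4 : (sqe M e : ℤ) = (sqe M (e+1) : ℤ) + 2*(M:ℤ) - 2*(e:ℤ) - 1 := by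
    rw [sq_cast, sq_cast]; push_cast; ring
  omega

lemma sqB (M g : ℕ) (h : g ≤ 2*M) : sqe M (g+1) + 2*(2*M - g) = sqe M g + (2*M+1) := by
  have h4 : (sqe M (g+1) : ℤ) = (sqe M g : ℤ) - 2*(M:ℤ) + 2*(g:ℤ) + 1 := by
    rw [sq_cast, sq_cast]; push_cast; ring
  omega

lemma sqC (M : ℕ) : sqe (M+1) 0 = sqe M 0 + (2*M+1) := by
  have h4 : (sqe (M+1) 0 : ℤ) = (sqe M 0 : ℤ) + 2*(M:ℤ) + 1 := by
    rw [sq_cast, sq_cast]; push_cast; ring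
  omega

noncomputable def xo (k : ℕ) : Zx := PowerSeries.X ^ (2*k - 1)

noncomputable def Afin (M : ℕ) : Polynomial Zx :=
  (∏ k ∈ Finset.Ioc 0 M, (1 + Polynomial.C (xo k) * Polynomial.X)) *
  (∏ k ∈ Finset.Ioc 0 M, (Polynomial.X + Polynomial.C (xo k)))

noncomputable def bcoef (M i : ℕ) : Zx := PowerSeries.X ^ (sqe M i) * gb (2*M) i

noncomputable def Bfin (M : ℕ) : Polynomial Zx :=
  ∑ i ∈ Finset.range (2*M+1), Polynomial.C (bcoef M i) * Polynomial.X ^ i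

lemma bcoef_of_gt {M i : ℕ} (h : 2*M < i) : bcoef M i = 0 := by
  rw [bcoef, gb_of_gt _ _ h, mul_zero]

lemma Bfin_coeff (M d : ℕ) : (Bfin M).coeff d = bcoef M d := by
  rw [Bfin, Polynomial.finset_sum_coeff]
  have h1 : ∀ i ∈ Finset.range (2*M+1),
      (Polynomial.C (bcoef M i) * Polynomial.X ^ i).coeff d
        = if i = d then bcoef M i else 0 := by
    intro i _
    rw [Polynomial.coeff_C_mul_X_pow]
    by_cases h : d = i
    · rw [if_pos h, if_pos h.symm]
    · rw [if_neg h, if_neg (Ne.symm h)]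
  rw [Finset.sum_congr rfl h1, Finset.sum_ite_eq' (Finset.range (2*M+1)) d (fun i => bcoef M i)]
  by_cases hd : d ∈ Finset.range (2*M+1)
  · rw [if_pos hd]
  · rw [if_neg hd, bcoef_of_gt (by simpa using hd)]

lemma W_expand (x : Zx) :
    (1 + Polynomial.C x * Polynomial.X) * (Polynomial.X + Polynomial.C x)
      = Polynomial.C x + (1 + Polynomial.C x * Polynomial.C x) * Polynomial.X ^ 1
        + Polynomial.C x * Polynomial.X ^ 2 := by
  ring

lemma coeffW (P : Polynomial Zx) (x : Zx) (d : ℕ) :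
    (P * ((1 + Polynomial.C x * Polynomial.X) * (Polynomial.X + Polynomial.C x))).coeff d
      = P.coeff d * x + (if 1 ≤ d then P.coeff (d-1) * (1 + x*x) else 0)
        + (if 2 ≤ d then P.coeff (d-2) * x else 0) := by
  rw [W_expand, mul_add, mul_add, Polynomial.coeff_add, Polynomial.coeff_add]
  congr 1
  · congr 1
    · rw [Polynomial.coeff_mul_C]
    · rw [show P * ((1 + Polynomial.C x * Polynomial.C x) * Polynomial.X ^ 1)
          = (P * (1 + Polynomial.C x * Polynomial.C x)) * Polynomial.X ^ 1 by ring,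
        Polynomial.coeff_mul_X_pow']
      by_cases h : 1 ≤ d
      · rw [if_pos h, if_pos h, mul_add, mul_one, Polynomial.coeff_add,
          show Polynomial.C x * Polynomial.C x = Polynomial.C (x*x) by rw [map_mul],
          Polynomial.coeff_mul_C, mul_add, mul_one]
      · rw [if_neg h, if_neg h]
  · rw [show P * (Polynomial.C x * Polynomial.X ^ 2) = (P * Polynomial.C x) * Polynomial.X ^ 2 by
        ring, Polynomial.coeff_mul_X_pow']
    by_cases h : 2 ≤ d
    · rw [if_pos h, if_pos h, Polynomial.coeff_mul_C]
    · rw [if_neg h, if_neg h]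

lemma Bstep (M d : ℕ) :
    bcoef M d * PowerSeries.X^(2*M+1)
      + (if 1 ≤ d then bcoef M (d-1) * (1 + PowerSeries.X^(2*M+1)*PowerSeries.X^(2*M+1)) else 0)
      + (if 2 ≤ d then bcoef M (d-2) * PowerSeries.X^(2*M+1) else 0)
      = bcoef (M+1) d := by
  rcases Nat.lt_or_ge (2*M+2) d with hbig | hle
  · rw [bcoef_of_gt (by omega), bcoef_of_gt (M := M+1) (by omega)]
    rw [show bcoef M (d-1) = 0 from bcoef_of_gt (by omega),
      show bcoef M (d-2) = 0 from bcoef_of_gt (by omega)]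
    simp
  · match d, hle with
    | 0, _ =>
        rw [if_neg (by omega), if_neg (by omega), add_zero, add_zero]
        rw [bcoef, bcoef]
        rw [show gb (2*M) 0 = 1 from gb_zero _, show gb (2*(M+1)) 0 = 1 from gb_zero _,
          mul_one, mul_one, ← pow_add, sqC]
    | 1, _ =>
        rw [if_pos le_rfl, if_neg (by omega), add_zero]
        rw [bcoef, bcoef, bcoef]
        rw [show (1:ℕ) - 1 = 0 from rfl, show gb (2*M) 0 = 1 from gb_zero _,
          show (2*(M+1) : ℕ) = 2*M+1+1 by ring,
          show gb (2*M+1+1) (0+1) = gb (2*M+1) 0 + Qp (0+1) * gb (2*M+1) (0+1) from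
            gb_pascal1 (2*M+1) 0,
          show gb (2*M+1) 0 = 1 from gb_zero _,
          show gb (2*M+1) (0+1) = gb (2*M) (0+1) + Qp (2*M - 0) * gb (2*M) 0 from
            gb_succ (2*M) 0,
          show gb (2*M) 0 = 1 from gb_zero _,
          show (0+1 : ℕ) = 1 from rfl]
        have e1 : sqe (M+1) 1 = sqe M 0 := sq_succ_succ M 0
        have hA := sqA M 0
        rw [show (0+1 : ℕ) = 1 from rfl] at hA
        have e2 : (PowerSeries.X : Zx)^(sqe M 1) * PowerSeries.X^(2*M+1)
            = PowerSeries.X^(sqe M 0) * Qp 1 := by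
          rw [Qp, ← pow_add, ← pow_add]
          congr 1
          omega
        have e3 : (PowerSeries.X : Zx)^(2*M+1) * PowerSeries.X^(2*M+1) = Qp (2*M+1) := by
          rw [Qp, ← pow_add]; congr 1; ring
        have e4 : Qp 1 * Qp (2*M - 0) = Qp (2*M+1) := by
          rw [Qp_add, show 1 + (2*M-0) = 2*M+1 by omega]
        rw [e1]
        linear_combination gb (2*M) 1 * e2 + PowerSeries.X^(sqe M 0) * e3
          - PowerSeries.X^(sqe M 0) * e4
    | (g+2), hle =>
        have hg : g ≤ 2*M := by omega
        rw [if_pos (by omega), if_pos (by omega)]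
        rw [show g+2-1 = g+1 from rfl, show g+2-2 = g from rfl]
        rcases eq_or_lt_of_le hg with hEdge | hlt
        · subst hEdge
          rw [bcoef_of_gt (by omega), bcoef_of_gt (by omega)]
          simp only [zero_mul, mul_zero, zero_add, add_zero]
          rw [bcoef, bcoef]
          rw [show (2*(M+1) : ℕ) = 2*M+2 by ring, show gb (2*M) (2*M) = 1 from gb_diag _,
            show gb (2*M+2) (2*M+2) = 1 from gb_diag _, mul_one, mul_one, ← pow_add]
          congr 1
          have hz : (sqe (M+1) (2*M+2) : ℤ) = (sqe M (2*M) : ℤ) + 2*(M:ℤ) + 1 := by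
            rw [sq_cast, sq_cast]; push_cast; ring
          omega
        · have hg1 : g + 1 ≤ 2*M := hlt
          rw [bcoef, bcoef, bcoef, bcoef]
          rw [show sqe (M+1) (g+2) = sqe M (g+1) from sq_succ_succ M (g+1)]
          have hsplit : gb (2*(M+1)) (g+2)
              = gb (2*M) (g+1) + Qp (2*M - g) * gb (2*M) g
                + Qp (g+2) * gb (2*M) (g+2)
                + Qp (g+2) * Qp (2*M - g - 1) * gb (2*M) (g+1) := by
            have h1 : gb (2*(M+1)) (g+2)
                = gb (2*M+1) (g+1) + Qp (g+2) * gb (2*M+1) (g+2) := by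
              rw [show (2*(M+1) : ℕ) = (2*M+1)+1 by ring]
              exact gb_pascal1 (2*M+1) (g+1)
            have h2 : gb (2*M+1) (g+1) = gb (2*M) (g+1) + Qp (2*M - g) * gb (2*M) g :=
              gb_succ (2*M) g
            have h3 : gb (2*M+1) (g+2) = gb (2*M) (g+2) + Qp (2*M - g - 1) * gb (2*M) (g+1) := by
              have := gb_succ (2*M) (g+1)
              rwa [show (2*M - (g+1) : ℕ) = 2*M - g - 1 by omega] at this
            rw [h1, h2, h3]
            ring
          rw [hsplit]
          have r1 : (PowerSeries.X : Zx)^(sqe M (g+2)) * PowerSeries.X^(2*M+1)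
              = PowerSeries.X^(sqe M (g+1)) * Qp (g+2) := by
            rw [Qp, ← pow_add, ← pow_add]
            congr 1
            have hA := sqA M (g+1)
            rw [show (g+1+1 : ℕ) = g+2 from rfl] at hA
            omega
          have r2 : (PowerSeries.X : Zx)^(sqe M g) * PowerSeries.X^(2*M+1)
              = PowerSeries.X^(sqe M (g+1)) * Qp (2*M - g) := by
            rw [Qp, ← pow_add, ← pow_add]
            congr 1
            have hB := sqB M g hg
            omega
          have r3 : (PowerSeries.X : Zx)^(2*M+1) * PowerSeries.X^(2*M+1)
              = Qp (g+2) * Qp (2*M - g - 1) := by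
            rw [Qp, Qp, ← pow_add, ← pow_add]
            congr 1
            omega
          linear_combination gb (2*M) (g+2) * r1 + gb (2*M) g * r2
            + (PowerSeries.X : Zx)^(sqe M (g+1)) * gb (2*M) (g+1) * r3

lemma Afin_succ (M : ℕ) :
    Afin (M+1) = Afin M *
      ((1 + Polynomial.C (xo (M+1)) * Polynomial.X) * (Polynomial.X + Polynomial.C (xo (M+1)))) := by
  rw [Afin, Afin, Finset.prod_Ioc_succ_top (Nat.zero_le _), Finset.prod_Ioc_succ_top (Nat.zero_le _)]
  ring

lemma AB : ∀ M, Afin M = Bfin M := by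
  intro M
  induction M with
  | zero =>
      rw [Afin, Bfin]
      simp only [Finset.Ioc_self, Finset.prod_empty, one_mul, Nat.mul_zero, Nat.zero_add,
        Finset.range_one, Finset.sum_singleton, pow_zero, mul_one]
      rw [bcoef, show sqe 0 0 = 0 from rfl, show gb (2*0) 0 = 1 from gb_zero _, pow_zero, one_mul,
        map_one]
  | succ M ih =>
      rw [Afin_succ, ih]
      apply Polynomial.ext
      intro d
      rw [Bfin_coeff]
      rw [coeffW]
      rw [Bfin_coeff, Bfin_coeff, Bfin_coeff]
      have hx : xo (M+1) = PowerSeries.X^(2*M+1) := by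
        rw [xo, show (2*(M+1)-1 : ℕ) = 2*M+1 by omega]
      rw [hx]
      exact Bstep M d
-- ## Part 4 : specializations

lemma jtPF_pos (g : ℕ → ℕ) (M : ℕ) :
    jtPF 1 g M = ∏ k ∈ Finset.Ioc 0 M, (1 + PowerSeries.X ^ (g k)) := by
  rw [jtPF]
  refine Finset.prod_congr rfl fun k _ => ?_
  rw [map_one, one_mul]

lemma JTP1 (M : ℕ) :
    jtPF 1 (fun k => 2*k - 1) M * jtPF 1 (fun k => 2*k - 1) M
      = ∑ i ∈ Finset.range (2*M+1), bcoef M i := by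
  have h := congrArg (Polynomial.eval (1 : Zx)) (AB M)
  rw [Afin, Bfin] at h
  rw [Polynomial.eval_mul, Polynomial.eval_prod, Polynomial.eval_prod,
    Polynomial.eval_finset_sum] at h
  simp only [Polynomial.eval_add, Polynomial.eval_mul, Polynomial.eval_one, Polynomial.eval_C,
    Polynomial.eval_X, Polynomial.eval_pow, mul_one, one_pow, xo] at h
  rw [jtPF_pos]
  convert h using 3

lemma prodShift : ∀ M : ℕ,
    ∏ k ∈ Finset.Ioc 0 (M+1), ((PowerSeries.X : Zx) + xo k)
      = 2 * PowerSeries.X^(M+1) * ∏ k ∈ Finset.Ioc 0 M, (1 + PowerSeries.X ^ (2*k)) := by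
  intro M
  induction M with
  | zero =>
      rw [Finset.prod_Ioc_succ_top (Nat.zero_le 0)]
      simp only [Finset.Ioc_self, Finset.prod_empty, one_mul, mul_one, xo]
      norm_num
      ring
  | succ M ih =>
      rw [Finset.prod_Ioc_succ_top (Nat.zero_le _), ih,
        Finset.prod_Ioc_succ_top (Nat.zero_le _)]
      rw [xo, show (2*(M+2)-1 : ℕ) = 2*(M+1)+1 by omega]
      have hx : (PowerSeries.X : Zx) + PowerSeries.X^(2*(M+1)+1)
          = PowerSeries.X * (1 + PowerSeries.X^(2*(M+1))) := by
        rw [pow_succ]; ring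
      rw [hx, show (M+1+1 : ℕ) = (M+1)+1 from rfl, pow_succ]
      ring

lemma JTP2 (M : ℕ) :
    jtPF 1 (fun k => 2*k) (M+1) * (2 * PowerSeries.X^(M+1) * jtPF 1 (fun k => 2*k) M)
      = ∑ i ∈ Finset.range (2*(M+1)+1), bcoef (M+1) i * PowerSeries.X ^ i := by
  have hprod1 : (∏ k ∈ Finset.Ioc 0 (M+1), (1 + xo k * PowerSeries.X))
      = jtPF 1 (fun k => 2*k) (M+1) := by
    rw [jtPF_pos]
    refine Finset.prod_congr rfl fun k hk => ?_
    have hk1 : 1 ≤ k := (Finset.mem_Ioc.mp hk).1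
    rw [xo, ← pow_succ, show (2*k-1+1 : ℕ) = 2*k by omega]
  have h := congrArg (Polynomial.eval (PowerSeries.X : Zx)) (AB (M+1))
  rw [Afin, Bfin] at h
  rw [Polynomial.eval_mul, Polynomial.eval_prod, Polynomial.eval_prod,
    Polynomial.eval_finset_sum] at h
  simp only [Polynomial.eval_add, Polynomial.eval_mul, Polynomial.eval_one, Polynomial.eval_C,
    Polynomial.eval_X, Polynomial.eval_pow] at h
  rw [hprod1, prodShift] at h
  rw [jtPF_pos (fun k => 2*k) M]
  exact h
-- ## Part 5a : the limit identity for phi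

lemma sq_cast' (M i : ℕ) : ((sqe M i : ℤ)) = ((M:ℤ) - i)^2 := sq_cast M i

lemma key_ineqA (N i : ℕ) (hi : i ≤ 2*N) : N - sqe N i ≤ 2 * (min i (2*N - i)) + 1 := by
  have hs : (sqe N i : ℤ) = ((N:ℤ) - i)^2 := sq_cast N i
  have h1 : (N:ℤ) - (sqe N i : ℤ) ≤ 2*(i:ℤ) + 1 := by nlinarith [sq_nonneg ((N:ℤ) - i - 1)]
  have h2 : (N:ℤ) - (sqe N i : ℤ) ≤ 2*(2*(N:ℤ) - i) + 1 := by
    nlinarith [sq_nonneg ((N:ℤ) - i + 1)]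
  rcases le_total i (2*N - i) with h | h
  · rw [min_eq_left h]; omega
  · rw [min_eq_right h]; omega

lemma termA (N i : ℕ) (hi : i ≤ 2*N) :
    PowerSeries.coeff N (DI 0 N * bcoef N i) = if sqe N i = N then 1 else 0 := by
  have hre : DI 0 N * bcoef N i = PowerSeries.X^(sqe N i) * (DI 0 N * gb (2*N) i) := by
    rw [bcoef]; ring
  rw [hre, coeff_X_pow_mul']
  by_cases he : sqe N i ≤ N
  · rw [if_pos he]
    have h1 := gbDQ_one hi (key_ineqA N i hi) (N - sqe N i) le_rfl
    rw [h1, coeff_one]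
    by_cases h2 : sqe N i = N
    · rw [if_pos (by omega), if_pos h2]
    · rw [if_neg (by omega), if_neg h2]
  · rw [if_neg he, if_neg (by omega)]

lemma countA (N : ℕ) :
    (∑ i ∈ Finset.range (2*N+1), if sqe N i = N then (1:ℤ) else 0)
      = if N = 0 then 1 else if IsSquare N then 2 else 0 := by
  by_cases h0 : N = 0
  · subst h0
    rw [if_pos rfl, Finset.sum_range_one, show sqe 0 0 = 0 by decide, if_pos rfl]
  · by_cases hsq : IsSquare N
    · obtain ⟨r, hr⟩ := hsq
      have hr0 : r ≠ 0 := by rintro rfl; simp at hr; exact h0 hr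
      have hrN : r ≤ N := by rw [hr]; exact Nat.le_mul_of_pos_left r (by omega)
      have hNr : (N:ℤ) = (r:ℤ)*(r:ℤ) := by exact_mod_cast hr
      have key : ∀ i ∈ Finset.range (2*N+1),
          (if sqe N i = N then (1:ℤ) else 0)
            = (if i = N - r then 1 else 0) + (if i = N + r then 1 else 0) := by
        intro i hi
        have hs : (sqe N i : ℤ) = ((N:ℤ) - i)^2 := sq_cast N i
        by_cases hc : sqe N i = N
        · have hcz : (sqe N i : ℤ) = (N:ℤ) := by exact_mod_cast hc
          have hz : ((N:ℤ) - i - r) * ((N:ℤ) - i + r) = 0 := by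
            linear_combination (-1 : ℤ) * hs + hcz + hNr
          rcases mul_eq_zero.mp hz with h | h
          · rw [if_pos hc, if_pos (by omega : i = N - r), if_neg (by omega : ¬ i = N + r),
              add_zero]
          · rw [if_pos hc, if_pos (by omega : i = N + r), if_neg (by omega : ¬ i = N - r),
              zero_add]
        · rw [if_neg hc, if_neg, if_neg, add_zero]
          · intro hE
            apply hc
            have : (sqe N i : ℤ) = (N:ℤ) := by
              rw [hs, hE]
              push_cast
              linear_combination -hNr
            exact_mod_cast this
          · intro hE
            apply hc
            have : (sqe N i : ℤ) = (N:ℤ) := by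
              rw [hs, hE]
              push_cast [hrN]
              linear_combination -hNr
            exact_mod_cast this
      rw [Finset.sum_congr rfl key, Finset.sum_add_distrib,
        Finset.sum_ite_eq' (Finset.range (2*N+1)) (N-r) (fun _ => (1:ℤ)),
        Finset.sum_ite_eq' (Finset.range (2*N+1)) (N+r) (fun _ => (1:ℤ)),
        if_pos (by simp; omega : N - r ∈ Finset.range (2*N+1)),
        if_pos (by simp; omega : N + r ∈ Finset.range (2*N+1)),
        if_neg h0, if_pos ⟨r, hr⟩]
      norm_num
    · rw [if_neg h0, if_neg hsq]
      apply Finset.sum_eq_zero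
      intro i hi
      rw [if_neg]
      intro hc
      apply hsq
      refine ⟨((N:ℤ) - i).natAbs, ?_⟩
      have hs : (sqe N i : ℤ) = ((N:ℤ) - i)^2 := sq_cast N i
      have h2 : ((N:ℤ) - i)^2 = ((((N:ℤ) - i).natAbs * ((N:ℤ) - i).natAbs : ℕ) : ℤ) := by
        rw [Int.natAbs_mul_self]
        ring
      have h3 : (N : ℤ) = ((((N:ℤ) - i).natAbs * ((N:ℤ) - i).natAbs : ℕ) : ℤ) := by
        rw [← h2, ← hs]
        exact_mod_cast hc.symm
      exact_mod_cast h3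

lemma DI_eq_jtPF (M : ℕ) : jtPF (-1) (fun k => 2*k) M = DI 0 M := rfl

lemma phi_eq : phi = f 2 * (Of * Of) := by
  apply PowerSeries.ext
  intro N
  rw [f_eq_jtPL 2, Of]
  have hs : PowerSeries.coeff N
      (jtPL (-1) (fun k => 2*k) * (jtPL 1 (fun k => 2*k-1) * jtPL 1 (fun k => 2*k-1)))
      = PowerSeries.coeff N
        (jtPF (-1) (fun k => 2*k) N * (jtPF 1 (fun k => 2*k-1) N * jtPF 1 (fun k => 2*k-1) N)) :=
    coeff_of_mEq (mEq_mul (mEq_jtPL _ _ hg_even le_rfl)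
      (mEq_mul (mEq_jtPL _ _ hg_odd le_rfl) (mEq_jtPL _ _ hg_odd le_rfl)))
  rw [hs, JTP1 N, DI_eq_jtPF, Finset.mul_sum, map_sum]
  rw [Finset.sum_congr rfl (fun i hi => termA N i (by simpa using Nat.lt_succ_iff.mp (Finset.mem_range.mp hi)))]
  rw [countA, phi, coeff_mk]
-- ## Part 5b : the limit identity for psi(q^2)

lemma psi2_coeff (n : ℕ) :
    PowerSeries.coeff n (substPow 2 psi) = if ∃ k, k*(k+1) = n then 1 else 0 := by
  rw [substPow, coeff_mk]
  by_cases h2 : 2 ∣ n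
  · rw [if_pos h2, psi, coeff_mk, Nat.mul_div_cancel' h2]
  · rw [if_neg h2, if_neg]
    rintro ⟨k, hk⟩
    rcases Nat.even_mul_succ_self k with ⟨t, ht⟩
    have hn : n = t + t := by rw [← hk, ht]
    exact h2 ⟨t, by omega⟩

lemma key_ineqB (N i : ℕ) (hi : i ≤ 2*(N+1)) :
    2*N+1 - (sqe (N+1) i + i) ≤ 2 * (min i (2*(N+1) - i)) + 1 := by
  have hs : (sqe (N+1) i : ℤ) = ((N:ℤ)+1 - i)^2 := by rw [sq_cast]; push_cast; ring
  have c1 : 0 ≤ ((N:ℤ) + 1 - i - 1) * ((N:ℤ) + 1 - i - 2) := by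
    rcases le_or_gt ((N:ℤ)+1-(i:ℤ)) 1 with h|h
    · have h1 : (N:ℤ) + 1 - i - 1 ≤ 0 := by omega
      have h2 : (N:ℤ) + 1 - i - 2 ≤ 0 := by omega
      nlinarith
    · exact mul_nonneg (by omega) (by omega)
  have c2 : 0 ≤ ((N:ℤ)+1-i) * ((N:ℤ)+1-i+1) := by
    rcases le_or_gt ((N:ℤ)+1-(i:ℤ)) 0 with h|h
    · have h2 : (N:ℤ) + 1 - i + 1 ≤ 1 := by omega
      nlinarith
    · exact mul_nonneg (by omega) (by omega)
  have h1 : (2*(N:ℤ)+1) - ((sqe (N+1) i : ℤ) + i) ≤ 2*(i:ℤ)+1 := by nlinarith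
  have h2 : (2*(N:ℤ)+1) - ((sqe (N+1) i : ℤ) + i) ≤ 2*(2*((N:ℤ)+1) - i)+1 := by nlinarith
  rcases le_total i (2*(N+1) - i) with h | h
  · rw [min_eq_left h]; omega
  · rw [min_eq_right h]; omega

lemma termB (N i : ℕ) (hi : i ≤ 2*(N+1)) :
    PowerSeries.coeff (2*N+1) (DI 0 (N+1) * (bcoef (N+1) i * PowerSeries.X^i))
      = if sqe (N+1) i + i = 2*N+1 then 1 else 0 := by
  have hre : DI 0 (N+1) * (bcoef (N+1) i * PowerSeries.X^i)
      = PowerSeries.X^(sqe (N+1) i + i) * (DI 0 (N+1) * gb (2*(N+1)) i) := by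
    rw [bcoef, pow_add]; ring
  rw [hre, coeff_X_pow_mul']
  by_cases he : sqe (N+1) i + i ≤ 2*N+1
  · rw [if_pos he]
    have h1 := gbDQ_one hi (key_ineqB N i hi) (2*N+1 - (sqe (N+1) i + i)) le_rfl
    rw [h1, coeff_one]
    by_cases h2 : sqe (N+1) i + i = 2*N+1
    · rw [if_pos (by omega), if_pos h2]
    · rw [if_neg (by omega), if_neg h2]
  · rw [if_neg he, if_neg (by omega)]

lemma countB (N : ℕ) :
    (∑ i ∈ Finset.range (2*(N+1)+1), if sqe (N+1) i + i = 2*N+1 then (1:ℤ) else 0)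
      = 2 * (if ∃ k, k*(k+1) = N then 1 else 0) := by
  by_cases hex : ∃ k, k*(k+1) = N
  · obtain ⟨k, hk⟩ := hex
    have hkz : (k:ℤ)*((k:ℤ)+1) = (N:ℤ) := by exact_mod_cast hk
    have hkN : k ≤ N := le_of_le_of_eq (Nat.le_mul_of_pos_right k (by omega)) hk
    have key : ∀ i ∈ Finset.range (2*(N+1)+1),
        (if sqe (N+1) i + i = 2*N+1 then (1:ℤ) else 0)
          = (if i = N - k then 1 else 0) + (if i = N + 1 + k then 1 else 0) := by
      intro i hi
      have hs : (sqe (N+1) i : ℤ) = ((N:ℤ)+1 - i)^2 := by rw [sq_cast]; push_cast; ring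
      by_cases hc : sqe (N+1) i + i = 2*N+1
      · have hcz : (sqe (N+1) i : ℤ) + i = 2*(N:ℤ)+1 := by exact_mod_cast hc
        have hz : ((N:ℤ)+1-i - ((k:ℤ)+1)) * ((N:ℤ)+1-i + k) = 0 := by
          linear_combination (-1 : ℤ) * hs + hcz - hkz
        rcases mul_eq_zero.mp hz with h | h
        · rw [if_pos hc, if_pos (by omega : i = N - k), if_neg (by omega : ¬ i = N+1+k),
            add_zero]
        · rw [if_pos hc, if_pos (by omega : i = N+1+k), if_neg (by omega : ¬ i = N - k),
            zero_add]
      · rw [if_neg hc, if_neg, if_neg, add_zero]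
        · intro hE
          apply hc
          have h1 : (sqe (N+1) i : ℤ) + i = 2*(N:ℤ)+1 := by
            rw [hs, hE]; push_cast; linear_combination hkz
          exact_mod_cast h1
        · intro hE
          apply hc
          have h1 : (sqe (N+1) i : ℤ) + i = 2*(N:ℤ)+1 := by
            rw [hs, hE]; push_cast [hkN]; linear_combination hkz
          exact_mod_cast h1
    rw [Finset.sum_congr rfl key, Finset.sum_add_distrib,
      Finset.sum_ite_eq' _ (N-k) (fun _ => (1:ℤ)),
      Finset.sum_ite_eq' _ (N+1+k) (fun _ => (1:ℤ)),
      if_pos (by simp; omega : N - k ∈ Finset.range (2*(N+1)+1)),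
      if_pos (by simp; omega : N+1+k ∈ Finset.range (2*(N+1)+1)),
      if_pos (⟨k, hk⟩ : ∃ k, k*(k+1) = N)]
    norm_num
  · rw [if_neg hex, mul_zero]
    apply Finset.sum_eq_zero
    intro i hi
    rw [if_neg]
    intro hc
    apply hex
    have hs : (sqe (N+1) i : ℤ) = ((N:ℤ)+1 - i)^2 := by rw [sq_cast]; push_cast; ring
    have hcz : (sqe (N+1) i : ℤ) + i = 2*(N:ℤ)+1 := by exact_mod_cast hc
    rcases le_or_gt (i:ℕ) N with h | h
    · refine ⟨N - i, ?_⟩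
      have h1 : ((N - i : ℕ) : ℤ) * (((N - i : ℕ) : ℤ) + 1) = (N:ℤ) := by
        push_cast [h]
        linear_combination hcz - hs
      exact_mod_cast h1
    · refine ⟨i - (N+1), ?_⟩
      have h1 : ((i - (N+1) : ℕ) : ℤ) * (((i - (N+1) : ℕ) : ℤ) + 1) = (N:ℤ) := by
        push_cast [show (N+1:ℕ) ≤ i by omega]
        linear_combination hcz - hs
      exact_mod_cast h1

lemma psi2_eq : substPow 2 psi = f 2 * (Ef * Ef) := by
  apply PowerSeries.ext
  intro N
  rw [f_eq_jtPL 2, Ef, psi2_coeff]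
  have hL : PowerSeries.coeff N
      (jtPL (-1) (fun k => 2*k) * (jtPL 1 (fun k => 2*k) * jtPL 1 (fun k => 2*k)))
      = PowerSeries.coeff N
        (jtPF (-1) (fun k => 2*k) (N+1) * (jtPF 1 (fun k => 2*k) (N+1) * jtPF 1 (fun k => 2*k) N)) :=
    coeff_of_mEq (mEq_mul (mEq_jtPL _ _ hg_even (by omega))
      (mEq_mul (mEq_jtPL _ _ hg_even (by omega)) (mEq_jtPL _ _ hg_even (by omega))))
  rw [hL]
  have hrw : DI 0 (N+1) * (∑ i ∈ Finset.range (2*(N+1)+1), bcoef (N+1) i * PowerSeries.X^i)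
      = PowerSeries.X^(N+1) *
          ((jtPF (-1) (fun k => 2*k) (N+1) * (jtPF 1 (fun k => 2*k) (N+1) * jtPF 1 (fun k => 2*k) N))
            + (jtPF (-1) (fun k => 2*k) (N+1) * (jtPF 1 (fun k => 2*k) (N+1) * jtPF 1 (fun k => 2*k) N))) := by
    rw [← JTP2 N, DI_eq_jtPF]; ring
  have hco := congrArg (PowerSeries.coeff (2*N+1)) hrw
  rw [show (2*N+1 : ℕ) = N + (N+1) by omega, coeff_X_pow_mul, map_add] at hco
  rw [show (N + (N+1) : ℕ) = 2*N+1 by omega] at hco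
  rw [Finset.mul_sum, map_sum,
    Finset.sum_congr rfl (fun i hi => termB N i (by
      have := Finset.mem_range.mp hi; omega)),
    countB] at hco
  have h2 : (2 : ℤ) * (if ∃ k, k*(k+1) = N then (1:ℤ) else 0)
      = 2 * PowerSeries.coeff N
          (jtPF (-1) (fun k => 2*k) (N+1) * (jtPF 1 (fun k => 2*k) (N+1) * jtPF 1 (fun k => 2*k) N)) := by
    rw [hco]; ring
  have := mul_left_cancel₀ (two_ne_zero (α := ℤ)) h2
  rw [← this]
-- ## Part 6 : substPow machinery

lemma substPow4_mul (F G : Zx) :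
    substPow 4 (F * G) = substPow 4 F * substPow 4 G := by
  apply PowerSeries.ext; intro n
  have hR : PowerSeries.coeff n (substPow 4 F * substPow 4 G)
      = ∑ m ∈ Finset.range (n+1),
          (if 4 ∣ m then PowerSeries.coeff (m/4) F else 0) *
          (if 4 ∣ (n - m) then PowerSeries.coeff ((n-m)/4) G else 0) := by
    rw [coeff_mul, Finset.Nat.sum_antidiagonal_eq_sum_range_succ_mk]
    refine Finset.sum_congr rfl fun m _ => ?_
    rw [substPow, substPow, coeff_mk, coeff_mk]
  rw [hR, substPow, coeff_mk]
  by_cases hd : 4 ∣ n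
  · rw [if_pos hd, coeff_mul, Finset.Nat.sum_antidiagonal_eq_sum_range_succ_mk]
    have hsub : (Finset.range (n/4+1)).image (fun t => 4*t) ⊆ Finset.range (n+1) := by
      intro m hm
      simp only [Finset.mem_image, Finset.mem_range] at hm ⊢
      obtain ⟨t, ht, rfl⟩ := hm
      omega
    rw [← Finset.sum_subset hsub]
    · rw [Finset.sum_image (by intro x _ y _ h; dsimp only at h; omega)]
      refine Finset.sum_congr rfl fun t ht => ?_
      simp only [Finset.mem_range] at ht
      rw [if_pos (show (4:ℕ) ∣ 4*t by omega), if_pos (show (4:ℕ) ∣ (n - 4*t) by omega),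
        show (4*t)/4 = t by omega, show (n - 4*t)/4 = n/4 - t by omega]
    · intro m hm hnot
      simp only [Finset.mem_range] at hm
      by_cases hdm : 4 ∣ m
      · exfalso
        apply hnot
        simp only [Finset.mem_image, Finset.mem_range]
        exact ⟨m/4, by omega, by omega⟩
      · rw [if_neg hdm, zero_mul]
  · rw [if_neg hd]
    symm
    apply Finset.sum_eq_zero
    intro m hm
    simp only [Finset.mem_range] at hm
    by_cases h1 : 4 ∣ m
    · rw [if_neg (by omega : ¬ (4:ℕ) ∣ (n - m)), mul_zero]
    · rw [if_neg h1, zero_mul]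

lemma substPow4_one : substPow 4 (1 : Zx) = 1 := by
  apply PowerSeries.ext; intro n
  rw [substPow, coeff_mk, coeff_one, coeff_one]
  by_cases hd : 4 ∣ n
  · rw [if_pos hd]
    by_cases h0 : n = 0
    · rw [if_pos (by omega), if_pos h0]
    · rw [if_neg (by omega), if_neg h0]
  · rw [if_neg hd, if_neg (by omega)]

lemma substPow4_C_mul_X_pow (c : ℤ) (e : ℕ) :
    substPow 4 (PowerSeries.C c * PowerSeries.X^e) = PowerSeries.C c * PowerSeries.X^(4*e) := by
  apply PowerSeries.ext; intro n
  rw [substPow, coeff_mk, coeff_C_mul_X_pow, coeff_C_mul_X_pow]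
  by_cases hd : 4 ∣ n
  · rw [if_pos hd]
    by_cases h2 : n/4 = e
    · rw [if_pos h2, if_pos (by omega)]
    · rw [if_neg h2, if_neg (by omega)]
  · rw [if_neg hd, if_neg (by omega)]

lemma substPow4_add (F G : Zx) :
    substPow 4 (F + G) = substPow 4 F + substPow 4 G := by
  apply PowerSeries.ext; intro n
  rw [map_add, substPow, substPow, substPow, coeff_mk, coeff_mk, coeff_mk, map_add]
  split_ifs <;> simp

lemma jtPF_succ (c : ℤ) (g : ℕ → ℕ) (M : ℕ) :
    jtPF c g (M+1) = jtPF c g M * (1 + PowerSeries.C c * PowerSeries.X^(g (M+1))) := by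
  rw [jtPF, Finset.prod_Ioc_succ_top (Nat.zero_le _), ← jtPF]

lemma substPow4_jtPF (c : ℤ) (g g' : ℕ → ℕ) (hgg : ∀ k, g' k = 4 * g k) (M : ℕ) :
    substPow 4 (jtPF c g M) = jtPF c g' M := by
  induction M with
  | zero =>
      rw [jtPF, jtPF, Finset.Ioc_self, Finset.prod_empty, Finset.prod_empty, substPow4_one]
  | succ M ih =>
      rw [jtPF_succ, jtPF_succ, substPow4_mul, ih, substPow4_add, substPow4_one,
        substPow4_C_mul_X_pow, hgg (M+1)]

lemma substPow4_f (m : ℕ) (hm : 1 ≤ m) : substPow 4 (f m) = f (4*m) := by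
  apply PowerSeries.ext; intro n
  rw [f_eq_jtPL m, f_eq_jtPL (4*m), substPow, coeff_mk, jtPL, coeff_mk, jtPL, coeff_mk]
  have key : jtPF (-1) (fun k => (4*m)*k) n = substPow 4 (jtPF (-1) (fun k => m*k) n) :=
    (substPow4_jtPF (-1) (fun k => m*k) (fun k => (4*m)*k) (fun k => by ring) n).symm
  rw [key, substPow, coeff_mk]
  by_cases hd : 4 ∣ n
  · rw [if_pos hd, if_pos hd]
    exact (jtPF_stab (-1) _ (hg_mul m hm) le_rfl (Nat.div_le_self n 4)).symm
  · rw [if_neg hd, if_neg hd]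

lemma substPow4_comp : substPow 4 (substPow 2 psi) = substPow 8 psi := by
  have hL : ∀ t, PowerSeries.coeff t (substPow 4 (substPow 2 psi))
      = if 4 ∣ t then (if ∃ k, k*(k+1) = t/4 then (1:ℤ) else 0) else 0 := by
    intro t; rw [substPow, coeff_mk, psi2_coeff]
  have hR : ∀ t, PowerSeries.coeff t (substPow 8 psi)
      = if 8 ∣ t then (if ∃ k, k*(k+1) = 2*(t/8) then (1:ℤ) else 0) else 0 := by
    intro t; rw [substPow, coeff_mk, psi, coeff_mk]
  apply PowerSeries.ext; intro n
  rw [hL, hR]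
  by_cases hd : 4 ∣ n
  · rw [if_pos hd]
    by_cases hex : ∃ k, k*(k+1) = n/4
    · obtain ⟨k, hk⟩ := hex
      obtain ⟨t, ht⟩ := Nat.even_mul_succ_self k
      have h4 : n/4 = t + t := by rw [← hk, ht]
      have h8 : 8 ∣ n := by omega
      rw [if_pos ⟨k, hk⟩, if_pos h8, if_pos (⟨k, by rw [show 2*(n/8) = n/4 by omega]; exact hk⟩ :
        ∃ k, k*(k+1) = 2*(n/8))]
    · rw [if_neg hex]
      by_cases h8 : 8 ∣ n
      · rw [if_pos h8, if_neg]
        rintro ⟨k, hk⟩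
        exact hex ⟨k, by rw [hk]; omega⟩
      · rw [if_neg h8]
  · rw [if_neg hd, if_neg (by omega)]

-- ## Part 7 : the 2-dissection of phi and assembly

lemma phiC : phi = substPow 4 phi + 2 * PowerSeries.X * substPow 8 psi := by
  apply PowerSeries.ext; intro n
  have h2 : (2 : Zx) * PowerSeries.X * substPow 8 psi
      = PowerSeries.X^1 * substPow 8 psi + PowerSeries.X^1 * substPow 8 psi := by
    ring
  have hphi : ∀ t, PowerSeries.coeff t phi
      = if t = 0 then (1:ℤ) else if IsSquare t then 2 else 0 := by
    intro t; rw [phi, coeff_mk]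
  have hphi4 : ∀ t, PowerSeries.coeff t (substPow 4 phi)
      = if 4 ∣ t then (if t/4 = 0 then (1:ℤ) else if IsSquare (t/4) then 2 else 0) else 0 := by
    intro t; rw [substPow, coeff_mk, phi, coeff_mk]
  have hpsi8 : ∀ t, PowerSeries.coeff t (substPow 8 psi)
      = if 8 ∣ t then (if ∃ k, k*(k+1) = 2*(t/8) then (1:ℤ) else 0) else 0 := by
    intro t; rw [substPow, coeff_mk, psi, coeff_mk]
  rw [map_add, h2, map_add, coeff_X_pow_mul', hphi, hphi4, hpsi8]
  by_cases h0 : n = 0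
  · subst h0
    norm_num
  · have h1n : 1 ≤ n := by omega
    rw [if_neg h0, if_pos h1n]
    by_cases h4 : 4 ∣ n
    · have h8n : ¬ 8 ∣ (n-1) := by omega
      rw [if_pos h4, if_neg h8n, if_neg (by omega : ¬ n/4 = 0)]
      have hiff : IsSquare n ↔ IsSquare (n/4) := by
        constructor
        · rintro ⟨r, hr⟩
          rcases Nat.even_or_odd r with ⟨s, hs⟩ | ⟨s, hs⟩
          · have he : n = 4*(s*s) := by rw [hr, hs]; ring
            exact ⟨s, by omega⟩
          · have he : n = 4*(s*s) + 4*s + 1 := by rw [hr, hs]; ring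
            omega
        · rintro ⟨s, hs⟩
          refine ⟨2*s, ?_⟩
          have he : (2*s)*(2*s) = 4*(s*s) := by ring
          omega
      by_cases hsq : IsSquare n
      · rw [if_pos hsq, if_pos (hiff.mp hsq)]
        norm_num
      · rw [if_neg hsq, if_neg (fun h => hsq (hiff.mpr h))]
        norm_num
    · rw [if_neg h4]
      by_cases hsq : IsSquare n
      · obtain ⟨r, hr⟩ := hsq
        rcases Nat.even_or_odd r with ⟨s, hs⟩ | ⟨s, hs⟩
        · exfalso
          have he : n = 4*(s*s) := by rw [hr, hs]; ring
          omega
        · have he : n = 4*(s*(s+1)) + 1 := by rw [hr, hs]; ring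
          obtain ⟨t, ht⟩ := Nat.even_mul_succ_self s
          have hn : n = 8*t + 1 := by omega
          rw [if_pos ⟨r, hr⟩, if_pos (by omega : 8 ∣ (n-1)),
            if_pos (⟨s, by rw [show 2*((n-1)/8) = 2*t by omega]; omega⟩ :
              ∃ k, k*(k+1) = 2*((n-1)/8))]
          norm_num
      · rw [if_neg hsq]
        by_cases h8 : 8 ∣ (n-1)
        · rw [if_pos h8, if_neg]
          · norm_num
          · rintro ⟨k, hk⟩
            apply hsq
            refine ⟨2*k+1, ?_⟩
            have he : (2*k+1)*(2*k+1) = 4*(k*(k+1)) + 1 := by ring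
            omega
        · rw [if_neg h8]
          norm_num

lemma Of_f : Of * f 1 * f 4 = f 2 * f 2 := by
  calc Of * f 1 * f 4 = (Of * Omf) * f 2 * f 4 := by rw [P1]; ring
    _ = Gf * f 2 * f 4 := by rw [P2]
    _ = (Gf * f 4) * f 2 := by ring
    _ = f 2 * f 2 := by rw [P3]

lemma idA : phi * f 1^2 * f 4^2 = f 2^5 := by
  rw [phi_eq]
  linear_combination (f 2 * (Of * f 1 * f 4 + f 2 * f 2)) * Of_f

lemma idB : substPow 2 psi * f 2 = f 4^2 := by
  rw [psi2_eq]
  linear_combination (Ef * f 2 + f 4) * P4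

lemma idA4 : substPow 4 phi * f 4^2 * f 16^2 = f 8^5 := by
  have h1 : phi * (f 1 * f 1) * (f 4 * f 4) = f 2 * (f 2 * (f 2 * (f 2 * f 2))) := by
    linear_combination idA
  have h := congrArg (substPow 4) h1
  simp only [substPow4_mul] at h
  rw [substPow4_f 1 le_rfl, substPow4_f 2 (by omega), substPow4_f 4 (by omega)] at h
  rw [show (4*1:ℕ) = 4 from rfl, show (4*2:ℕ) = 8 from rfl, show (4*4:ℕ) = 16 from rfl] at h
  linear_combination h

lemma idB4 : substPow 8 psi * f 8 = f 16^2 := by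
  have h1 : substPow 2 psi * f 2 = f 4 * f 4 := by linear_combination idB
  have h := congrArg (substPow 4) h1
  simp only [substPow4_mul] at h
  rw [substPow4_comp, substPow4_f 2 (by omega), substPow4_f 4 (by omega)] at h
  rw [show (4*2:ℕ) = 8 from rfl, show (4*4:ℕ) = 16 from rfl] at h
  linear_combination h

lemma bigT : f 2^5 * f 8 * f 16^2
    = f 1^2 * (f 8^6 + 2 * PowerSeries.X * f 4^2 * f 16^4) := by
  linear_combination (-(f 8 * f 16^2)) * idA + (f 1^2 * f 4^2 * f 8 * f 16^2) * phiC
    + (f 1^2 * f 8) * idA4 + (2*PowerSeries.X*f 1^2*f 4^2*f 16^2) * idB4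

lemma f1_unit : IsUnit (f 1) := by
  rw [PowerSeries.isUnit_iff_constantCoeff]
  have h : PowerSeries.coeff 0 (f 1) = 1 := by
    rw [f, coeff_mk, Finset.Icc_eq_empty (by omega), Finset.prod_empty, coeff_one, if_pos rfl]
  rw [← PowerSeries.coeff_zero_eq_constantCoeff_apply, h]
  exact isUnit_one


theorem stmt8 :
    Ring.inverse (f 1) ^ 2 * (f 2 ^ 5 * f 8 * f 16 ^ 2)
      = f 8 ^ 6 + 2 * PowerSeries.X * f 4 ^ 2 * f 16 ^ 4 := by
  have hinv : Ring.inverse (f 1) * f 1 = 1 := Ring.inverse_mul_cancel _ f1_unit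
  rw [bigT,
    show Ring.inverse (f 1)^2 * (f 1^2 * (f 8^6 + 2*PowerSeries.X*f 4^2*f 16^4))
      = (Ring.inverse (f 1) * f 1)^2 * (f 8^6 + 2*PowerSeries.X*f 4^2*f 16^4) by ring,
    hinv, one_pow, one_mul]
end
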